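/- If 0 ≤ c < 1, then the LSimRank iteration converges: the map F has a unique fixed point S*, and the LSimRank sequence S_0 = I, S_{m+1} = F(S_m) converges to S* entrywise, i.e., for all i,j the real sequence m ↦ (S_m)_{ij} tends to (S*)_{ij}. -/

import Mathlib

open Matrix

variable {n : ℕ}

/-- The in-degree of vertex `j` in the graph with adjacency matrix `A`. -/
noncomputable def indeg (A : Matrix (Fin n) (Fin n) ℝ) (j : Fin n) : ℝ :=
  ∑ u, A u j

/-- The normalization matrix: `N i j = 1/(indeg i · indeg j)` for `i ≠ j` (with the
convention that this is `0` when the product of in-degrees is `0`, since in `ℝ` we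
have `0⁻¹ = 0`), and `N i i = 0`. -/
noncomputable def normMat (A : Matrix (Fin n) (Fin n) ℝ) : Matrix (Fin n) (Fin n) ℝ :=
  Matrix.of fun i j => if i = j then 0 else (indeg A i * indeg A j)⁻¹

/-- The LSimRank iteration map `F(S) = I + c · (L ∘ N ∘ (Aᵀ S A))`,
where `∘` is the entrywise (Hadamard) product. -/
noncomputable def lsimStep (A L : Matrix (Fin n) (Fin n) ℝ) (c : ℝ)
    (S : Matrix (Fin n) (Fin n) ℝ) : Matrix (Fin n) (Fin n) ℝ :=
  1 + c • (Matrix.hadamard L (Matrix.hadamard (normMat A) (Aᵀ * S * A)))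

/-- The LSimRank sequence: `S 0 = I`, `S (m+1) = F (S m)`. -/
noncomputable def lsimSeq (A L : Matrix (Fin n) (Fin n) ℝ) (c : ℝ) :
    ℕ → Matrix (Fin n) (Fin n) ℝ
  | 0 => 1
  | m + 1 => lsimStep A L c (lsimSeq A L c m)

/-!
For the elementwise sup norm, `S ↦ N ∘ (Aᵀ S A)` is nonexpansive: for nonnegative `A`,
`|(Aᵀ M A) i j| ≤ indeg i · indeg j · ‖M‖`, and `N i j` divides by exactly this product.
Since `|L i j| ≤ 1`, the map `F` is therefore `c`-Lipschitz, and for `c < 1` the Banach fixed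
point theorem gives the unique fixed point and the convergence of `S_m = F^[m] I` to it.
-/

open scoped Matrix.Norms.Elementwise

lemma abs_mul_mul_apply_le {l m k p : Type*} [Fintype m] [Fintype k]
    (A : Matrix l m ℝ) (M : Matrix m k ℝ) (B : Matrix k p ℝ)
    (hA : ∀ i u, 0 ≤ A i u) (hB : ∀ v j, 0 ≤ B v j) (i : l) (j : p) :
    |(A * M * B) i j| ≤ (∑ u, A i u) * (∑ v, B v j) * ‖M‖ := by
  calc |(A * M * B) i j| = |∑ v, ∑ u, A i u * M u v * B v j| := by
        simp only [mul_apply, Finset.sum_mul]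
    _ ≤ ∑ v, ∑ u, A i u * ‖M‖ * B v j := by
        refine (Finset.abs_sum_le_sum_abs _ _).trans (Finset.sum_le_sum fun v _ => ?_)
        refine (Finset.abs_sum_le_sum_abs _ _).trans (Finset.sum_le_sum fun u _ => ?_)
        rw [abs_mul, abs_mul, abs_of_nonneg (hA i u), abs_of_nonneg (hB v j)]
        have hM : |M u v| ≤ ‖M‖ := M.norm_entry_le_entrywise_sup_norm
        exact mul_le_mul_of_nonneg_right (mul_le_mul_of_nonneg_left hM (hA i u)) (hB v j)
    _ = (∑ u, A i u) * (∑ v, B v j) * ‖M‖ := by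
        simp only [Finset.sum_mul, Finset.mul_sum]
        exact Finset.sum_congr rfl fun _ _ => Finset.sum_congr rfl fun _ _ => by ring

lemma indeg_nonneg {A : Matrix (Fin n) (Fin n) ℝ} (hA : ∀ i j, 0 ≤ A i j) (j : Fin n) :
    0 ≤ indeg A j :=
  Finset.sum_nonneg fun u _ => hA u j

lemma normMat_nonneg {A : Matrix (Fin n) (Fin n) ℝ} (hA : ∀ i j, 0 ≤ A i j) (i j : Fin n) :
    0 ≤ normMat A i j := by
  simp only [normMat, of_apply]
  split_ifs
  · exact le_rfl
  · exact inv_nonneg.mpr (mul_nonneg (indeg_nonneg hA i) (indeg_nonneg hA j))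

lemma normMat_mul_indeg_le_one (A : Matrix (Fin n) (Fin n) ℝ) (i j : Fin n) :
    normMat A i j * (indeg A i * indeg A j) ≤ 1 := by
  simp only [normMat, of_apply]
  split_ifs
  · simp
  · by_cases h : indeg A i * indeg A j = 0
    · simp [h]
    · exact (inv_mul_cancel₀ h).le

lemma norm_normMat_hadamard_le {A : Matrix (Fin n) (Fin n) ℝ} (hA : ∀ i j, 0 ≤ A i j)
    (M : Matrix (Fin n) (Fin n) ℝ) : ‖normMat A ⊙ (Aᵀ * M * A)‖ ≤ ‖M‖ := by
  refine (norm_le_iff (norm_nonneg M)).2 fun i j => ?_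
  calc ‖(normMat A ⊙ (Aᵀ * M * A)) i j‖
      = normMat A i j * |(Aᵀ * M * A) i j| := by
        rw [hadamard_apply, Real.norm_eq_abs, abs_mul, abs_of_nonneg (normMat_nonneg hA i j)]
    _ ≤ normMat A i j * (indeg A i * indeg A j * ‖M‖) := by
        gcongr
        · exact normMat_nonneg hA i j
        · exact abs_mul_mul_apply_le _ _ _ (fun i u => hA u i) hA i j
    _ ≤ ‖M‖ := by
        rw [← mul_assoc]
        exact mul_le_of_le_one_left (norm_nonneg M) (normMat_mul_indeg_le_one A i j)

lemma norm_hadamard_le_of_norm_le_one {m k α : Type*} [Fintype m] [Fintype k]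
    [SeminormedRing α]
    {L : Matrix m k α} (hL : ∀ i j, ‖L i j‖ ≤ 1) (X : Matrix m k α) : ‖L ⊙ X‖ ≤ ‖X‖ :=
  (norm_le_iff (norm_nonneg X)).2 fun i j =>
    calc ‖L i j * X i j‖ ≤ ‖L i j‖ * ‖X i j‖ := norm_mul_le _ _
      _ ≤ ‖X‖ := (mul_le_of_le_one_left (norm_nonneg _) (hL i j)).trans
        X.norm_entry_le_entrywise_sup_norm

lemma lsimStep_sub_lsimStep (A L : Matrix (Fin n) (Fin n) ℝ) (c : ℝ)
    (S T : Matrix (Fin n) (Fin n) ℝ) :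
    lsimStep A L c S - lsimStep A L c T = c • (L ⊙ (normMat A ⊙ (Aᵀ * (S - T) * A))) := by
  ext i j
  simp only [lsimStep, Matrix.sub_apply, Matrix.add_apply, Matrix.smul_apply, hadamard_apply,
    mul_sub, sub_mul, smul_eq_mul]
  ring

lemma lipschitzWith_lsimStep {A L : Matrix (Fin n) (Fin n) ℝ} (hA : ∀ i j, 0 ≤ A i j)
    (hL : ∀ i j, ‖L i j‖ ≤ 1) {c : ℝ} (hc : 0 ≤ c) :
    LipschitzWith ⟨c, hc⟩ (lsimStep A L c) :=
  LipschitzWith.of_dist_le_mul fun S T => by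
    rw [dist_eq_norm, dist_eq_norm, lsimStep_sub_lsimStep, norm_smul, Real.norm_of_nonneg hc]
    exact mul_le_mul_of_nonneg_left
      ((norm_hadamard_le_of_norm_le_one hL _).trans (norm_normMat_hadamard_le hA _)) hc

lemma lsimSeq_eq_iterate (A L : Matrix (Fin n) (Fin n) ℝ) (c : ℝ) (m : ℕ) :
    lsimSeq A L c m = (lsimStep A L c)^[m] 1 := by
  induction m with
  | zero => rfl
  | succ m ih => rw [Function.iterate_succ_apply', ← ih, lsimSeq]

/-- for `0 ≤ c < 1`, the LSimRank iteration converges: the iteration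
map has a unique fixed point `S*`, and the LSimRank sequence converges to `S*`
entrywise. -/
theorem lsimSeq_converges (A L : Matrix (Fin n) (Fin n) ℝ)
    (hA : ∀ i j, A i j = 0 ∨ A i j = 1)
    (hL0 : ∀ i j, 0 ≤ L i j) (hL1 : ∀ i j, L i j ≤ 1)
    (c : ℝ) (hc0 : 0 ≤ c) (hc1 : c < 1) :
    ∃ Sstar : Matrix (Fin n) (Fin n) ℝ,
      lsimStep A L c Sstar = Sstar ∧
      (∀ S : Matrix (Fin n) (Fin n) ℝ, lsimStep A L c S = S → S = Sstar) ∧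
      ∀ i j, Filter.Tendsto (fun m => lsimSeq A L c m i j)
        Filter.atTop (nhds (Sstar i j)) := by
  have hA_nonneg : ∀ i j, 0 ≤ A i j := fun i j => by rcases hA i j with h | h <;> simp [h]
  have hL : ∀ i j, ‖L i j‖ ≤ 1 := fun i j =>
    (Real.norm_of_nonneg (hL0 i j)).trans_le (hL1 i j)
  -- the elementwise norm induces the product uniformity, but not reducibly
  have : CompleteSpace (Matrix (Fin n) (Fin n) ℝ) :=
    inferInstanceAs (CompleteSpace (Fin n → Fin n → ℝ))
  have hF : ContractingWith ⟨c, hc0⟩ (lsimStep A L c) :=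
    ⟨by exact_mod_cast hc1, lipschitzWith_lsimStep hA_nonneg hL hc0⟩
  refine ⟨hF.fixedPoint, hF.fixedPoint_isFixedPt, fun S hS => hF.fixedPoint_unique hS,
    fun i j => ?_⟩
  simp only [lsimSeq_eq_iterate]
  exact ((continuous_id.matrix_elem i j).tendsto _).comp (hF.tendsto_iterate_fixedPoint 1)
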